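/- Let (G,γ) be a Z/3Z-colored graph and let G̃ be its development. Then (G,γ) is a cone-Laman graph if and only if G̃ is a Laman graph (a (2,3)-graph that is (2,3)-sparse). Moreover, for a cone-Laman-sparse (G,γ), a subgraph G' of G is a rigid component of (G,γ) (a maximal subgraph with m' = 2n'−1 edges) if and only if its lift π⁻¹(G') is a symmetric (2,3)-component of G̃ (a maximal (2,3)-block that is fixed setwise by the Z/3Z-action). -/

import Mathlib

/-- A finite directed multigraph: each edge has a tail and a head vertex. -/
structure Multigraph (V : Type) (E : Type) where
  tail : E → V
  head : E → V

namespace Multigraph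

variable {V E Γ : Type}

/-- The starting vertex of a step `(e, b)`: the edge `e` traversed forwards if `b = true`,
backwards otherwise. -/
def stepSrc (G : Multigraph V E) (s : E × Bool) : V :=
  if s.2 then G.tail s.1 else G.head s.1

/-- The ending vertex of a step `(e, b)`. -/
def stepDst (G : Multigraph V E) (s : E × Bool) : V :=
  if s.2 then G.head s.1 else G.tail s.1

/-- `G.WalkFrom u v w`: the list of steps `w` is a walk from `u` to `v`
(edge orientations ignored: each step records an edge and a traversal direction). -/
inductive WalkFrom (G : Multigraph V E) : V → V → List (E × Bool) → Prop
  | nil (v : V) : WalkFrom G v v []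
  | cons {v : V} (s : E × Bool) {rest : List (E × Bool)} :
      WalkFrom G (G.stepDst s) v rest → WalkFrom G (G.stepSrc s) v (s :: rest)

/-- `ρ` of a walk: the sum of the colors of forward-traversed edges minus
the sum of the colors of backward-traversed edges. -/
def rho [AddCommGroup Γ] (γ : E → Γ) (w : List (E × Bool)) : Γ :=
  (w.map fun s => if s.2 then γ s.1 else -γ s.1).sum

/-- A cycle contained in the subgraph with edge set `S`: a nonempty closed walk,
with no repeated edges and no repeated vertices. -/
def IsCycleIn (G : Multigraph V E) (S : Finset E) (w : List (E × Bool)) : Prop :=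
  (∃ v, G.WalkFrom v v w) ∧ w ≠ [] ∧ (∀ s ∈ w, s.1 ∈ S) ∧
    (w.map Prod.fst).Nodup ∧ (w.map G.stepSrc).Nodup

/-- The subgraph with edge set `S` has trivial `Γ`-image: `ρ(C) = 0` for every
cycle `C` contained in it. -/
def TrivialImage [AddCommGroup Γ] (G : Multigraph V E) (γ : E → Γ) (S : Finset E) : Prop :=
  ∀ w, G.IsCycleIn S w → rho γ w = 0

/-- The vertices spanned by an edge set. -/
def verts [DecidableEq V] (G : Multigraph V E) (S : Finset E) : Finset V :=
  S.image G.tail ∪ S.image G.head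

/-- The edge set `S` is `(k, ℓ)`-sparse: every nonempty subgraph with `n'` vertices and
`m'` edges satisfies `m' ≤ k n' - ℓ`. -/
def Sparse [DecidableEq V] (G : Multigraph V E) (k ℓ : ℤ) (S : Finset E) : Prop :=
  ∀ S' ⊆ S, S'.Nonempty → (S'.card : ℤ) ≤ k * ((G.verts S').card : ℤ) - ℓ

/-- The edge set `S` is a `(k, ℓ)`-graph (as a subgraph on its spanned vertices):
it is `(k, ℓ)`-sparse and has exactly `k n - ℓ` edges. -/
def Tight [DecidableEq V] (G : Multigraph V E) (k ℓ : ℤ) (S : Finset E) : Prop :=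
  G.Sparse k ℓ S ∧ (S.card : ℤ) = k * ((G.verts S).card : ℤ) - ℓ

/-- The edge set `S` is a `(k, ℓ)`-circuit: edge-minimal not `(k, ℓ)`-sparse. -/
def Circuit [DecidableEq V] [DecidableEq E] (G : Multigraph V E) (k ℓ : ℤ) (S : Finset E) :
    Prop :=
  ¬ G.Sparse k ℓ S ∧ ∀ e ∈ S, G.Sparse k ℓ (S.erase e)

/-- A `(k, ℓ)`-basis of `G`: a maximal `(k, ℓ)`-sparse edge set. -/
def Basis [DecidableEq V] (G : Multigraph V E) (k ℓ : ℤ) (L : Finset E) : Prop :=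
  G.Sparse k ℓ L ∧ ∀ L', L ⊆ L' → G.Sparse k ℓ L' → L' = L

/-- `C` is the fundamental `(k, ℓ)`-circuit of some edge `e ∉ L` with respect to the
`(k, ℓ)`-basis `L`: a `(k, ℓ)`-circuit contained in `L + e`. -/
def FundCircuit [DecidableEq V] [DecidableEq E] (G : Multigraph V E) (k ℓ : ℤ)
    (L C : Finset E) : Prop :=
  G.Circuit k ℓ C ∧ ∃ e, e ∉ L ∧ C ⊆ insert e L

/-- The whole graph `G` is a `(k, ℓ)`-graph: `(k, ℓ)`-sparse, with exactly
`k n - ℓ` edges where `n` is the number of vertices of `G`. -/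
def IsKLGraph [DecidableEq V] [Fintype V] [Fintype E] (G : Multigraph V E) (k ℓ : ℤ) : Prop :=
  G.Sparse k ℓ Finset.univ ∧ (Fintype.card E : ℤ) = k * (Fintype.card V : ℤ) - ℓ

/-- The colored subgraph with edge set `S` is Ross-sparse: nonempty subgraphs with trivial
`Γ`-image satisfy `m' ≤ 2n' - 3`, and those with non-trivial image satisfy `m' ≤ 2n' - 2`. -/
def RossSparseOn [DecidableEq V] [AddCommGroup Γ] (G : Multigraph V E) (γ : E → Γ)
    (S : Finset E) : Prop :=
  ∀ S' ⊆ S, S'.Nonempty →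
    (G.TrivialImage γ S' → (S'.card : ℤ) ≤ 2 * ((G.verts S').card : ℤ) - 3) ∧
    (¬ G.TrivialImage γ S' → (S'.card : ℤ) ≤ 2 * ((G.verts S').card : ℤ) - 2)

/-- The colored subgraph with edge set `S` is a Ross graph (on its spanned vertices):
Ross-sparse with exactly `2n - 2` edges. -/
def RossGraphOn [DecidableEq V] [AddCommGroup Γ] (G : Multigraph V E) (γ : E → Γ)
    (S : Finset E) : Prop :=
  G.RossSparseOn γ S ∧ (S.card : ℤ) = 2 * ((G.verts S).card : ℤ) - 2

/-- The whole colored graph `(G, γ)` is a Ross graph: Ross-sparse with exactly `2n - 2`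
edges, `n` being the number of vertices of `G`. -/
def RossGraph [DecidableEq V] [Fintype V] [Fintype E] [AddCommGroup Γ] (G : Multigraph V E)
    (γ : E → Γ) : Prop :=
  G.RossSparseOn γ Finset.univ ∧ (Fintype.card E : ℤ) = 2 * (Fintype.card V : ℤ) - 2

/-- The colored graph `(G, γ)` is cone-Laman-sparse: nonempty subgraphs with trivial image
satisfy `m' ≤ 2n' - 3`, those with non-trivial image satisfy `m' ≤ 2n' - 1`. -/
def ConeLamanSparse [DecidableEq V] [AddCommGroup Γ] (G : Multigraph V E) (γ : E → Γ) : Prop :=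
  ∀ S' : Finset E, S'.Nonempty →
    (G.TrivialImage γ S' → (S'.card : ℤ) ≤ 2 * ((G.verts S').card : ℤ) - 3) ∧
    (¬ G.TrivialImage γ S' → (S'.card : ℤ) ≤ 2 * ((G.verts S').card : ℤ) - 1)

/-- The whole colored graph `(G, γ)` is a cone-Laman graph: cone-Laman-sparse with exactly
`2n - 1` edges, `n` being the number of vertices of `G`. -/
def ConeLamanGraph [DecidableEq V] [Fintype V] [Fintype E] [AddCommGroup Γ]
    (G : Multigraph V E) (γ : E → Γ) : Prop :=
  G.ConeLamanSparse γ ∧ (Fintype.card E : ℤ) = 2 * (Fintype.card V : ℤ) - 1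

/-- A (simple) path from `u` to `v` using only edges in `S`: a walk visiting no vertex
twice. -/
def IsPathIn (G : Multigraph V E) (S : Finset E) (u v : V) (w : List (E × Bool)) : Prop :=
  G.WalkFrom u v w ∧ (∀ s ∈ w, s.1 ∈ S) ∧ (u :: w.map G.stepDst).Nodup

/-- `G` is connected. -/
def Connected (G : Multigraph V E) : Prop :=
  ∀ u v : V, ∃ w : List (E × Bool), G.WalkFrom u v w

/-- `T` is a spanning tree of `G`: every pair of vertices is joined by a path in `T`,
and `T` contains no cycle. -/
def IsSpanningTree (G : Multigraph V E) (T : Finset E) : Prop :=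
  (∀ u v : V, ∃ w, G.IsPathIn T u v w) ∧ ∀ w, ¬ G.IsCycleIn T w

/-- `T` is a spanning forest of `G`: a maximal acyclic edge set. -/
def IsSpanningForest (G : Multigraph V E) (T : Finset E) : Prop :=
  (∀ w, ¬ G.IsCycleIn T w) ∧
    ∀ T', T ⊆ T' → (∀ w, ¬ G.IsCycleIn T' w) → T' = T

/-- In the tree `T` rooted at `r`, vertex `x` lies on the (unique) path from the root `r`
to `y`; i.e. `x` is an ancestor of `y`. -/
def Anc (G : Multigraph V E) (T : Finset E) (r x y : V) : Prop :=
  ∀ w, G.IsPathIn T r y w → x ∈ (r :: w.map G.stepDst)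

/-- `a` is the least common ancestor of `i` and `j` in the tree `T` rooted at `r`:
the vertex where the paths from `i` to `r` and from `j` to `r` first converge. -/
def IsLCA (G : Multigraph V E) (T : Finset E) (r a i j : V) : Prop :=
  G.Anc T r a i ∧ G.Anc T r a j ∧ ∀ x, G.Anc T r x i → G.Anc T r x j → G.Anc T r x a

/-- The development of a `ℤ/3ℤ`-colored graph: vertices `i_z`, and for each edge `ij`
with color `γ_ij` the three edges `i_z j_{z + γ_ij}`. -/
def Development (G : Multigraph V E) (γ : E → ZMod 3) :
    Multigraph (V × ZMod 3) (E × ZMod 3) where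
  tail s := (G.tail s.1, s.2)
  head s := (G.head s.1, s.2 + γ s.1)

/-- The lift `π⁻¹(S)` in the development of the subgraph with edge set `S`. -/
def lift [DecidableEq E] (S : Finset E) : Finset (E × ZMod 3) :=
  S ×ˢ (Finset.univ : Finset (ZMod 3))

/-- The map `α_z : i_w ↦ i_{w+z}` on the vertices of the development. -/
def devShift (z : ZMod 3) : V × ZMod 3 → V × ZMod 3 :=
  fun p => (p.1, p.2 + z)

/-- The map `α_z` on the edges of the development. -/
def devShiftE (z : ZMod 3) : E × ZMod 3 → E × ZMod 3 :=
  fun s => (s.1, s.2 + z)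

/-- Two vertices of a multigraph are adjacent if some edge joins them (in either
direction). -/
def Adj (G : Multigraph V E) (u v : V) : Prop :=
  ∃ e, (G.tail e = u ∧ G.head e = v) ∨ (G.tail e = v ∧ G.head e = u)

end Multigraph

/-!
A subgraph of `G` with trivial image lifts isomorphically into the development `G̃` along a
potential for `γ`, and the full lift `π⁻¹(S)` of any subgraph has three times its edges and three
times its vertices; so `(2,3)`-sparsity of `G̃` gives both cone-Laman counts. Conversely, sort
the edges and vertices of a subgraph of `G̃` by how many of their three lifts it contains: the
`k`-th edge layer is a subgraph of `G` spanning at most the `k`-th vertex layer. If moreover no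
vertex has more than `k` lifts (`k = 1, 2`), the `k`-th edge layer has trivial image: the fibres
of its vertices (one or two points of `ℤ/3ℤ`) are carried along each edge by translation by `γ`
and have trivial stabilizer. This supplies the `-3`.

For the components: the three translates of a `(2,3)`-block containing `π⁻¹(S)` all contain
`π⁻¹(S)`, so their union is again a block; it is symmetric, hence the lift of its projection.
Finally `π⁻¹(S)` is `(2,3)`-tight exactly when `S` has `2n' - 1` edges.
-/

open scoped Pointwise in
lemma ZMod.three_eq_zero_of_vadd_finset_eq : ∀ (A : Finset (ZMod 3)) (c : ZMod 3),
    0 < A.card → A.card < 3 → c +ᵥ A = A → c = 0 := by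
  decide

lemma List.exists_eq_append_of_not_nodup_map {α β : Type*} (f : α → β) {l : List α}
    (h : ¬ (l.map f).Nodup) : ∃ a s₁ b s₂ c, l = a ++ s₁ :: (b ++ s₂ :: c) ∧ f s₁ = f s₂ := by
  induction l with
  | nil => exact absurd List.nodup_nil h
  | cons x t ih =>
    by_cases hx : f x ∈ t.map f
    · obtain ⟨s₂, hs₂, hfs₂⟩ := List.mem_map.mp hx
      obtain ⟨b, c, rfl⟩ := List.append_of_mem hs₂
      exact ⟨[], x, b, s₂, c, rfl, hfs₂.symm⟩
    · obtain ⟨a, s₁, b, s₂, c, rfl, hfs⟩ := ih fun hn => h (by simp [hx, hn])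
      exact ⟨x :: a, s₁, b, s₂, c, rfl, hfs⟩

namespace Multigraph

open Finset
open scoped Pointwise

variable {V E Γ : Type}

section Walks

variable {G : Multigraph V E}

def flipStep (s : E × Bool) : E × Bool := (s.1, !s.2)

@[simp] lemma stepSrc_flipStep (G : Multigraph V E) (s : E × Bool) :
    G.stepSrc (flipStep s) = G.stepDst s := by
  cases s with | mk e b => cases b <;> rfl

@[simp] lemma stepDst_flipStep (G : Multigraph V E) (s : E × Bool) :
    G.stepDst (flipStep s) = G.stepSrc s := by
  cases s with | mk e b => cases b <;> rfl

lemma WalkFrom.single (G : Multigraph V E) (s : E × Bool) :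
    G.WalkFrom (G.stepSrc s) (G.stepDst s) [s] :=
  .cons s (.nil _)

lemma walkFrom_cons_iff {u v : V} {s : E × Bool} {w : List (E × Bool)} :
    G.WalkFrom u v (s :: w) ↔ u = G.stepSrc s ∧ G.WalkFrom (G.stepDst s) v w := by
  constructor
  · rintro (_ | ⟨s, h⟩)
    exact ⟨rfl, h⟩
  · rintro ⟨rfl, h⟩
    exact .cons s h

lemma WalkFrom.append {u v x : V} {w₁ w₂ : List (E × Bool)}
    (h₁ : G.WalkFrom u v w₁) (h₂ : G.WalkFrom v x w₂) : G.WalkFrom u x (w₁ ++ w₂) := by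
  induction h₁ with
  | nil v => exact h₂
  | cons s _ ih => exact .cons s (ih h₂)

lemma WalkFrom.of_append {u v : V} {w₁ w₂ : List (E × Bool)}
    (h : G.WalkFrom u v (w₁ ++ w₂)) : ∃ x, G.WalkFrom u x w₁ ∧ G.WalkFrom x v w₂ := by
  induction w₁ generalizing u with
  | nil => exact ⟨u, .nil u, h⟩
  | cons s t ih =>
    obtain ⟨rfl, hrest⟩ := walkFrom_cons_iff.mp (List.cons_append ▸ h)
    obtain ⟨x, hx₁, hx₂⟩ := ih hrest
    exact ⟨x, .cons s hx₁, hx₂⟩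

lemma WalkFrom.reverse {u v : V} {w : List (E × Bool)}
    (h : G.WalkFrom u v w) : G.WalkFrom v u (w.reverse.map flipStep) := by
  induction h with
  | nil v => exact .nil v
  | cons s _ ih =>
    simpa using ih.append (by simpa using WalkFrom.single G (flipStep s))

lemma WalkFrom.split_of_stepSrc_eq {u v : V} {a b c : List (E × Bool)} {s₁ s₂ : E × Bool}
    (h : G.WalkFrom u v (a ++ s₁ :: (b ++ s₂ :: c))) (hs : G.stepSrc s₁ = G.stepSrc s₂) :
    G.WalkFrom (G.stepSrc s₁) (G.stepSrc s₁) (s₁ :: b) ∧ G.WalkFrom u v (a ++ s₂ :: c) := by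
  obtain ⟨x, ha, h₁⟩ := h.of_append
  obtain ⟨rfl, h₂⟩ := walkFrom_cons_iff.mp h₁
  obtain ⟨y, hb, h₃⟩ := h₂.of_append
  obtain ⟨rfl, hc⟩ := walkFrom_cons_iff.mp h₃
  exact ⟨.cons s₁ (hs ▸ hb), ha.append (hs ▸ .cons s₂ hc)⟩

lemma WalkFrom.split_of_flipStep {u v : V} {a b c : List (E × Bool)} {s : E × Bool}
    (h : G.WalkFrom u v (a ++ s :: (b ++ flipStep s :: c))) :
    G.WalkFrom (G.stepDst s) (G.stepDst s) b ∧ G.WalkFrom u v (a ++ c) := by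
  obtain ⟨x, ha, h₁⟩ := h.of_append
  obtain ⟨rfl, h₂⟩ := walkFrom_cons_iff.mp h₁
  obtain ⟨y, hb, h₃⟩ := h₂.of_append
  obtain ⟨rfl, hc⟩ := walkFrom_cons_iff.mp h₃
  rw [stepSrc_flipStep] at hb
  rw [stepDst_flipStep] at hc
  exact ⟨hb, ha.append hc⟩

end Walks

section Rho

variable [AddCommGroup Γ] (γ : E → Γ)

lemma rho_cons (s : E × Bool) (w : List (E × Bool)) : rho γ (s :: w) = rho γ [s] + rho γ w := by
  simp [rho]

lemma rho_append (w₁ w₂ : List (E × Bool)) : rho γ (w₁ ++ w₂) = rho γ w₁ + rho γ w₂ := by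
  simp [rho]

lemma rho_flipStep (s : E × Bool) : rho γ [flipStep s] = -rho γ [s] := by
  cases s with | mk e b => cases b <;> simp [rho, flipStep]

lemma rho_reverse (w : List (E × Bool)) : rho γ (w.reverse.map flipStep) = -rho γ w := by
  induction w with
  | nil => simp [rho]
  | cons s t ih =>
    simp only [List.reverse_cons, List.map_append, rho_append, ih, List.map_cons, List.map_nil,
      rho_flipStep]
    rw [rho_cons γ s t]
    abel

end Rho

section Potential

variable [AddCommGroup Γ] {G : Multigraph V E} {γ : E → Γ} {S : Finset E}

/-- A closed walk that is not a cycle either passes a vertex twice or uses an edge in both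
directions; in both cases it splits into two shorter closed walks. -/
lemma TrivialImage.rho_eq_zero (hT : G.TrivialImage γ S) {v : V} {w : List (E × Bool)}
    (hw : G.WalkFrom v v w) (hS : ∀ s ∈ w, s.1 ∈ S) : rho γ w = 0 := by
  induction hn : w.length using Nat.strong_induction_on generalizing v w with
  | _ n ih =>
  have shorter : ∀ {u : V} {w' : List (E × Bool)}, G.WalkFrom u u w' →
      (∀ s ∈ w', s.1 ∈ S) → w'.length < w.length → rho γ w' = 0 :=
    fun hw' hS' hlt => ih _ (hn ▸ hlt) hw' hS' rfl
  by_cases hsrc : (w.map G.stepSrc).Nodup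
  · by_cases hedge : (w.map Prod.fst).Nodup
    · obtain rfl | hne := eq_or_ne w []
      · rfl
      · exact hT w ⟨⟨v, hw⟩, hne, hS, hedge, hsrc⟩
    · obtain ⟨a, s, b, s', c, rfl, he⟩ := List.exists_eq_append_of_not_nodup_map Prod.fst hedge
      have hs' : s' = flipStep s := by
        have hne : G.stepSrc s ≠ G.stepSrc s' := fun h => by simp [h, List.nodup_append] at hsrc
        obtain ⟨e, b₁⟩ := s
        obtain ⟨e', b₂⟩ := s'
        obtain rfl : e = e' := he
        cases b₁ <;> cases b₂ <;> simp_all [flipStep]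
      subst hs'
      obtain ⟨hb, hac⟩ := hw.split_of_flipStep
      have hb0 := shorter hb (fun t ht => hS t (by simp [ht]))
        (by simp only [List.length_append, List.length_cons]; omega)
      have hac0 := shorter hac (fun t ht => hS t (by simp at ht ⊢; tauto))
        (by simp only [List.length_append, List.length_cons]; omega)
      rw [rho_append] at hac0
      rw [rho_append, rho_cons γ s, rho_append, rho_cons γ (flipStep s) c, rho_flipStep]
      calc _ = (rho γ a + rho γ c) + rho γ b := by abel
        _ = 0 := by rw [hac0, hb0, add_zero]
  · obtain ⟨a, s, b, s', c, rfl, hs⟩ := List.exists_eq_append_of_not_nodup_map G.stepSrc hsrc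
    obtain ⟨hsb, has'c⟩ := hw.split_of_stepSrc_eq hs
    have hsb0 := shorter hsb (fun t ht => hS t (by simp at ht ⊢; tauto))
      (by simp only [List.length_append, List.length_cons]; omega)
    have has'c0 := shorter has'c (fun t ht => hS t (by simp at ht ⊢; tauto))
      (by simp only [List.length_append, List.length_cons]; omega)
    rw [rho_cons γ s b] at hsb0
    rw [rho_append, rho_cons γ s' c] at has'c0
    rw [rho_append, rho_cons γ s, rho_append, rho_cons γ s' c]
    calc _ = (rho γ [s] + rho γ b) + (rho γ a + (rho γ [s'] + rho γ c)) := by abel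
      _ = 0 := by rw [hsb0, has'c0, add_zero]

lemma TrivialImage.rho_eq_of_walkFrom (hT : G.TrivialImage γ S) {u v : V}
    {w₁ w₂ : List (E × Bool)} (h₁ : G.WalkFrom u v w₁) (h₂ : G.WalkFrom u v w₂)
    (hS₁ : ∀ s ∈ w₁, s.1 ∈ S) (hS₂ : ∀ s ∈ w₂, s.1 ∈ S) : rho γ w₁ = rho γ w₂ := by
  have h := hT.rho_eq_zero (h₁.append h₂.reverse) fun s hs => by
    simp only [List.mem_append, List.mem_map, List.mem_reverse] at hs
    obtain hs | ⟨t, ht, rfl⟩ := hs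
    exacts [hS₁ s hs, hS₂ t ht]
  rwa [rho_append, rho_reverse, ← sub_eq_add_neg, sub_eq_zero] at h

def ReachIn (G : Multigraph V E) (S : Finset E) (u v : V) : Prop :=
  ∃ w, G.WalkFrom u v w ∧ ∀ s ∈ w, s.1 ∈ S

lemma reachIn_equivalence (G : Multigraph V E) (S : Finset E) : Equivalence (G.ReachIn S) where
  refl v := ⟨[], .nil v, by simp⟩
  symm := fun ⟨w, hw, hS⟩ => ⟨w.reverse.map flipStep, hw.reverse, fun s hs => by
    obtain ⟨t, ht, rfl⟩ := List.mem_map.mp hs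
    exact hS t (List.mem_reverse.mp ht)⟩
  trans := fun ⟨w₁, hw₁, hS₁⟩ ⟨w₂, hw₂, hS₂⟩ =>
    ⟨w₁ ++ w₂, hw₁.append hw₂, fun s hs => (List.mem_append.mp hs).elim (hS₁ s) (hS₂ s)⟩

/-- The potential of `v` is `ρ` of a walk to `v` from a fixed representative of its
`S`-component; trivial image makes it independent of the walk. -/
lemma TrivialImage.exists_potential (hT : G.TrivialImage γ S) :
    ∃ φ : V → Γ, ∀ e ∈ S, φ (G.head e) = φ (G.tail e) + γ e := by
  let r : Setoid V := ⟨G.ReachIn S, reachIn_equivalence G S⟩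
  choose W hW hWS using fun v => Quotient.mk_out (s := r) v
  refine ⟨fun v => rho γ (W v), fun e he => ?_⟩
  have hstep : G.WalkFrom (G.tail e) (G.head e) [(e, true)] := WalkFrom.single G (e, true)
  have hroot : (⟦G.tail e⟧ : Quotient r).out = (⟦G.head e⟧ : Quotient r).out :=
    congrArg Quotient.out (Quotient.sound ⟨[(e, true)], hstep, by simpa using he⟩)
  have h := hT.rho_eq_of_walkFrom (hroot ▸ (hW (G.tail e)).append hstep) (hW (G.head e))
    (fun s hs => (List.mem_append.mp hs).elim (hWS _ s) (by simp_all)) (hWS _)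
  rw [rho_append] at h
  simpa [rho] using h.symm

end Potential

section Verts

variable [DecidableEq V] (G : Multigraph V E)

lemma mem_verts {S : Finset E} {v : V} :
    v ∈ G.verts S ↔ ∃ e ∈ S, G.tail e = v ∨ G.head e = v := by
  simp only [verts, mem_union, mem_image]
  grind

lemma tail_mem_verts {S : Finset E} {e : E} (he : e ∈ S) : G.tail e ∈ G.verts S :=
  (G.mem_verts).mpr ⟨e, he, .inl rfl⟩

lemma head_mem_verts {S : Finset E} {e : E} (he : e ∈ S) : G.head e ∈ G.verts S :=
  (G.mem_verts).mpr ⟨e, he, .inr rfl⟩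

lemma verts_mono {S T : Finset E} (h : S ⊆ T) : G.verts S ⊆ G.verts T :=
  union_subset_union (image_subset_image h) (image_subset_image h)

variable [DecidableEq E]

lemma verts_union (S T : Finset E) : G.verts (S ∪ T) = G.verts S ∪ G.verts T := by
  simp only [verts, image_union]
  grind

lemma verts_inter_subset (S T : Finset E) : G.verts (S ∩ T) ⊆ G.verts S ∩ G.verts T :=
  subset_inter (G.verts_mono inter_subset_left) (G.verts_mono inter_subset_right)

end Verts

section Tight

variable [DecidableEq V] {G : Multigraph V E} {k ℓ : ℤ}

lemma Sparse.mono {S T : Finset E} (hT : G.Sparse k ℓ T) (hST : S ⊆ T) : G.Sparse k ℓ S :=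
  fun S' hS' => hT S' (hS'.trans hST)

/-- Inclusion–exclusion, the intersection spanning at most `verts A ∩ verts B`. -/
lemma Tight.union [DecidableEq E] (hk : 0 ≤ k) {A B : Finset E} (hA : G.Tight k ℓ A)
    (hB : G.Tight k ℓ B) (hAB : G.Sparse k ℓ (A ∪ B)) (hI : (A ∩ B).Nonempty) :
    G.Tight k ℓ (A ∪ B) := by
  refine ⟨hAB, le_antisymm (hAB _ subset_rfl (hI.mono inter_subset_union)) ?_⟩
  have hedges : ((A ∪ B).card : ℤ) + (A ∩ B).card = A.card + B.card := by
    exact_mod_cast card_union_add_card_inter A B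
  have hverts : ((G.verts A ∪ G.verts B).card : ℤ) + (G.verts A ∩ G.verts B).card =
      (G.verts A).card + (G.verts B).card := by
    exact_mod_cast card_union_add_card_inter _ _
  have hinter : ((A ∩ B).card : ℤ) ≤ k * (G.verts A ∩ G.verts B).card - ℓ := by
    have h := hAB _ inter_subset_union hI
    have := mul_le_mul_of_nonneg_left
      (Int.ofNat_le.mpr (card_le_card (G.verts_inter_subset A B))) hk
    linarith
  have hkverts : k * (G.verts A ∪ G.verts B).card + k * (G.verts A ∩ G.verts B).card =
      k * (G.verts A).card + k * (G.verts B).card := by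
    rw [← mul_add, ← mul_add, hverts]
  rw [G.verts_union]
  linarith [hA.2, hB.2]

end Tight

section Fiber

variable {X Y : Type} [DecidableEq X] [DecidableEq Y] [Fintype Y]

def fiber (A : Finset (X × Y)) (x : X) : Finset Y := univ.filter fun y => (x, y) ∈ A

def layer (A : Finset (X × Y)) (k : ℕ) : Finset X :=
  (A.image Prod.fst).filter fun x => k ≤ (fiber A x).card

variable {A : Finset (X × Y)}

@[simp] lemma mem_fiber {x : X} {y : Y} : y ∈ fiber A x ↔ (x, y) ∈ A := by
  simp [fiber]

lemma mem_layer {x : X} {k : ℕ} :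
    x ∈ layer A k ↔ (∃ y, (x, y) ∈ A) ∧ k ≤ (fiber A x).card := by
  simp [layer]

lemma layer_succ_subset (k : ℕ) : layer A (k + 1) ⊆ layer A k :=
  monotone_filter_right _ fun _ _ h => Nat.le_of_succ_le h

lemma layer_one_nonempty (hA : A.Nonempty) : (layer A 1).Nonempty := by
  obtain ⟨⟨x, y⟩, h⟩ := hA
  exact ⟨x, mem_layer.mpr ⟨⟨y, h⟩, card_pos.mpr ⟨y, mem_fiber.mpr h⟩⟩⟩

lemma card_eq_sum_card_fiber (A : Finset (X × Y)) :
    A.card = ∑ x ∈ A.image Prod.fst, (fiber A x).card := by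
  rw [card_eq_sum_card_fiberwise fun p hp => mem_image_of_mem Prod.fst hp]
  refine sum_congr rfl fun x _ => card_bij (fun p _ => p.2) ?_ ?_ ?_
  · rintro ⟨x', y⟩ hp
    simp only [mem_filter] at hp
    simpa [← hp.2] using hp.1
  · rintro ⟨_, _⟩ h₁ ⟨_, _⟩ h₂ rfl
    simp only [mem_filter] at h₁ h₂
    rw [h₁.2, h₂.2]
  · exact fun y hy => ⟨(x, y), by simpa using hy, rfl⟩

/-- A point over which `A` has `c` points lies in layers `1, …, c`. -/
lemma card_eq_sum_card_layer (A : Finset (X × Y)) :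
    A.card = ∑ k ∈ range (Fintype.card Y), (layer A (k + 1)).card := by
  have hfiber : ∀ x, (fiber A x).card = ∑ k ∈ range (Fintype.card Y),
      if k + 1 ≤ (fiber A x).card then 1 else 0 := fun x => by
    have hle := card_le_univ (fiber A x)
    rw [← card_filter]
    conv_lhs => rw [← card_range (fiber A x).card]
    congr 1
    ext k
    simp only [mem_range, mem_filter]
    omega
  rw [card_eq_sum_card_fiber A, sum_congr rfl fun x _ => hfiber x, sum_comm]
  simp only [layer, card_filter]

lemma card_eq_card_layers_zmod_three (B : Finset (X × ZMod 3)) :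
    B.card = (layer B 1).card + (layer B 2).card + (layer B 3).card := by
  simp [card_eq_sum_card_layer B, ZMod.card, sum_range_succ]

end Fiber

section Transport

variable [AddCommGroup Γ] [DecidableEq Γ] {G : Multigraph V E} {γ : E → Γ}
  {S : Finset E} {F : V → Finset Γ}

lemma WalkFrom.eq_rho_vadd (hF : ∀ e ∈ S, F (G.head e) = γ e +ᵥ F (G.tail e)) {u v : V}
    {w : List (E × Bool)} (hw : G.WalkFrom u v w) (hS : ∀ s ∈ w, s.1 ∈ S) :
    F v = rho γ w +ᵥ F u := by
  induction hw with
  | nil v => simp [rho]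
  | cons s _ ih =>
    rw [ih fun t ht => hS t (.tail _ ht), rho_cons, add_comm, ← vadd_vadd]
    congr 1
    obtain ⟨e, b⟩ := s
    have he := hF e (hS _ (.head _))
    cases b <;> simp [stepSrc, stepDst, rho, he]

/-- Going around a cycle translates `F v` by `ρ` of the cycle, back to itself. -/
lemma trivialImage_of_vadd [DecidableEq V] (hF : ∀ e ∈ S, F (G.head e) = γ e +ᵥ F (G.tail e))
    (hstab : ∀ v ∈ G.verts S, ∀ c : Γ, c +ᵥ F v = F v → c = 0) : G.TrivialImage γ S := by
  rintro w ⟨⟨v, hw⟩, hne, hS, -, -⟩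
  obtain ⟨⟨e, b⟩, w', rfl⟩ := List.exists_cons_of_ne_nil hne
  have hv : v ∈ G.verts S := by
    rw [(walkFrom_cons_iff.mp hw).1]
    cases b
    exacts [G.head_mem_verts (hS _ (.head _)), G.tail_mem_verts (hS _ (.head _))]
  exact hstab v hv _ (hw.eq_rho_vadd hF hS).symm

end Transport

lemma ConeLamanSparse.card_le [DecidableEq V] [AddCommGroup Γ] {G : Multigraph V E}
    {γ : E → Γ} (h : G.ConeLamanSparse γ) {S : Finset E} (hS : S.Nonempty) :
    (S.card : ℤ) ≤ 2 * (G.verts S).card - 1 := by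
  by_cases hT : G.TrivialImage γ S
  · linarith [(h S hS).1 hT]
  · exact (h S hS).2 hT

lemma devShiftE_injective (z : ZMod 3) : Function.Injective (devShiftE (E := E) z) :=
  fun _ _ h => by simpa [devShiftE, Prod.ext_iff] using h

lemma devShift_injective (z : ZMod 3) : Function.Injective (devShift (V := V) z) :=
  fun _ _ h => by simpa [devShift, Prod.ext_iff] using h

section Development

variable [DecidableEq V] [DecidableEq E] {G : Multigraph V E} {γ : E → ZMod 3}

lemma fiber_subset_fiber_verts_tail (A : Finset (E × ZMod 3)) (e : E) :
    fiber A e ⊆ fiber ((G.Development γ).verts A) (G.tail e) :=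
  fun _ hz => mem_fiber.mpr ((G.Development γ).tail_mem_verts (mem_fiber.mp hz))

lemma vadd_fiber_subset_fiber_verts_head (A : Finset (E × ZMod 3)) (e : E) :
    γ e +ᵥ fiber A e ⊆ fiber ((G.Development γ).verts A) (G.head e) := by
  intro z hz
  obtain ⟨y, hy, rfl⟩ := mem_vadd_finset.mp hz
  rw [mem_fiber, vadd_eq_add, add_comm]
  exact (G.Development γ).head_mem_verts (mem_fiber.mp hy)

lemma verts_layer_subset (A : Finset (E × ZMod 3)) (k : ℕ) :
    G.verts (layer A k) ⊆ layer ((G.Development γ).verts A) k := by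
  intro v hv
  obtain ⟨e, he, rfl | rfl⟩ := G.mem_verts.mp hv <;> obtain ⟨⟨z, hz⟩, hk⟩ := mem_layer.mp he
  · exact mem_layer.mpr ⟨⟨z, (G.Development γ).tail_mem_verts hz⟩,
      hk.trans (card_le_card (fiber_subset_fiber_verts_tail A e))⟩
  · refine mem_layer.mpr ⟨⟨z + γ e, (G.Development γ).head_mem_verts hz⟩, hk.trans ?_⟩
    rw [← card_vadd_finset (γ e)]
    exact card_le_card (vadd_fiber_subset_fiber_verts_head A e)

lemma trivialImage_layer (A : Finset (E × ZMod 3)) {k : ℕ} (hk₀ : 0 < k) (hk₃ : k < 3)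
    (hempty : layer ((G.Development γ).verts A) (k + 1) = ∅) :
    G.TrivialImage γ (layer A k) := by
  have hcard : ∀ v ∈ G.verts (layer A k), (fiber ((G.Development γ).verts A) v).card = k := by
    intro v hv
    obtain ⟨hex, hge⟩ := mem_layer.mp (verts_layer_subset A k hv)
    have hlt : ¬ k + 1 ≤ (fiber ((G.Development γ).verts A) v).card := fun h =>
      absurd (mem_layer.mpr ⟨hex, h⟩) (by simp [hempty])
    omega
  refine trivialImage_of_vadd (F := fiber ((G.Development γ).verts A)) (fun e he => ?_)
    fun v hv c hc => ZMod.three_eq_zero_of_vadd_finset_eq _ c (by rw [hcard v hv]; omega)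
      (by rw [hcard v hv]; omega) hc
  have hk := (mem_layer.mp he).2
  have htail : fiber A e = fiber ((G.Development γ).verts A) (G.tail e) :=
    eq_of_subset_of_card_le (fiber_subset_fiber_verts_tail A e)
      (by rw [hcard _ (G.tail_mem_verts he)]; exact hk)
  have hhead : γ e +ᵥ fiber A e = fiber ((G.Development γ).verts A) (G.head e) :=
    eq_of_subset_of_card_le (vadd_fiber_subset_fiber_verts_head A e)
      (by rw [hcard _ (G.head_mem_verts he), card_vadd_finset]; exact hk)
  rw [← hhead, htail]

lemma ConeLamanSparse.card_layer_le (h : G.ConeLamanSparse γ) (A : Finset (E × ZMod 3))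
    (k : ℕ) : (layer A k).card = 0 ∨
      ((layer A k).card : ℤ) ≤ 2 * (layer ((G.Development γ).verts A) k).card - 1 := by
  obtain h₀ | hne := (layer A k).eq_empty_or_nonempty
  · exact .inl (by simp [h₀])
  · have := card_le_card (verts_layer_subset (G := G) (γ := γ) A k)
    have := h.card_le hne
    omega

lemma ConeLamanSparse.card_layer_le_of_card_layer_succ (h : G.ConeLamanSparse γ)
    (A : Finset (E × ZMod 3)) {k : ℕ} (hk₀ : 0 < k) (hk₃ : k < 3)
    (hempty : (layer ((G.Development γ).verts A) (k + 1)).card = 0) : (layer A k).card = 0 ∨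
      ((layer A k).card : ℤ) ≤ 2 * (layer ((G.Development γ).verts A) k).card - 3 := by
  obtain h₀ | hne := (layer A k).eq_empty_or_nonempty
  · exact .inl (by simp [h₀])
  · have := card_le_card (verts_layer_subset (G := G) (γ := γ) A k)
    have := (h _ hne).1 (trivialImage_layer A hk₀ hk₃ (card_eq_zero.mp hempty))
    omega

section Lift

lemma mem_lift {S : Finset E} {s : E × ZMod 3} : s ∈ lift S ↔ s.1 ∈ S := by
  simp [lift]

lemma card_lift (S : Finset E) : (lift S).card = 3 * S.card := by
  rw [lift, card_product, card_univ, ZMod.card, mul_comm]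

lemma lift_nonempty {S : Finset E} (hS : S.Nonempty) : (lift S).Nonempty :=
  hS.product univ_nonempty

lemma image_fst_lift (S : Finset E) : (lift S).image Prod.fst = S :=
  product_image_fst univ_nonempty

lemma lift_mono {S T : Finset E} (h : S ⊆ T) : lift S ⊆ lift T :=
  product_subset_product_left h

lemma subset_lift_image_fst (T : Finset (E × ZMod 3)) : T ⊆ lift (T.image Prod.fst) :=
  fun _ hs => mem_lift.mpr (mem_image_of_mem _ hs)

lemma verts_lift (S : Finset E) :
    (G.Development γ).verts (lift S) = G.verts S ×ˢ (univ : Finset (ZMod 3)) := by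
  ext ⟨v, z⟩
  simp only [mem_product, mem_univ, and_true, Multigraph.mem_verts, mem_lift]
  constructor
  · rintro ⟨⟨e, w⟩, he, h | h⟩ <;> cases h
    exacts [⟨e, he, .inl rfl⟩, ⟨e, he, .inr rfl⟩]
  · rintro ⟨e, he, rfl | rfl⟩
    · exact ⟨(e, z), he, .inl rfl⟩
    · exact ⟨(e, z - γ e), he, .inr (by simp [Development])⟩

lemma card_verts_lift (S : Finset E) :
    ((G.Development γ).verts (lift S)).card = 3 * (G.verts S).card := by
  rw [verts_lift, card_product, card_univ, ZMod.card, mul_comm]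

lemma lift_image_devShiftE (S : Finset E) (z : ZMod 3) :
    (lift S).image (devShiftE z) = lift S := by
  ext ⟨e, w⟩
  simp only [mem_image, mem_lift, Prod.exists, devShiftE, Prod.mk.injEq]
  exact ⟨fun ⟨e', w', he', he, _⟩ => he ▸ he', fun he => ⟨e, w - z, he, rfl, sub_add_cancel w z⟩⟩

lemma lift_image_fst_eq_union (T : Finset (E × ZMod 3)) :
    lift (T.image Prod.fst) = T ∪ T.image (devShiftE 1) ∪ T.image (devShiftE 2) := by
  ext ⟨e, w⟩
  simp only [mem_lift, mem_image, mem_union, Prod.exists, devShiftE, Prod.mk.injEq,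
    exists_and_right, exists_eq_right]
  constructor
  · rintro ⟨z, hz⟩
    obtain h | h | h : w - z = 0 ∨ w - z = 1 ∨ w - z = 2 := by generalize w - z = d; decide +revert
    · exact .inl (.inl (by rwa [sub_eq_zero.mp h]))
    · exact .inl (.inr ⟨e, z, hz, rfl, by rw [← h, add_sub_cancel]⟩)
    · exact .inr ⟨e, z, hz, rfl, by rw [← h, add_sub_cancel]⟩
  · rintro ((h | ⟨_, z, hz, rfl, -⟩) | ⟨_, z, hz, rfl, -⟩)
    exacts [⟨w, h⟩, ⟨z, hz⟩, ⟨z, hz⟩]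

end Lift

section Sparsity

variable [Fintype E]

lemma development_sparse_of_coneLamanSparse (h : G.ConeLamanSparse γ) :
    (G.Development γ).Sparse 2 3 univ := by
  intro A _ hA
  have hA₁ := h.card_layer_le A 1
  have hA₂ := h.card_layer_le A 2
  have hA₃ := h.card_layer_le A 3
  have hT₁ := h.card_layer_le_of_card_layer_succ A (k := 1) (by norm_num) (by norm_num)
  have hT₂ := h.card_layer_le_of_card_layer_succ A (k := 2) (by norm_num) (by norm_num)
  have hW₂ := card_le_card (layer_succ_subset (A := (G.Development γ).verts A) 1)
  have hW₃ := card_le_card (layer_succ_subset (A := (G.Development γ).verts A) 2)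
  simp only [Nat.reduceAdd] at hT₁ hT₂ hW₂ hW₃
  have hA₀ := card_pos.mpr (layer_one_nonempty hA)
  rw [card_eq_card_layers_zmod_three A, card_eq_card_layers_zmod_three]
  -- If the second vertex layer is empty, `hT₁` gives the `-3`; if only the third is, `hT₂`
  -- does; otherwise all three vertex layers are nonempty and each contributes `-1`.
  omega

lemma card_le_of_trivialImage (hdev : (G.Development γ).Sparse 2 3 univ) {S : Finset E}
    (hS : S.Nonempty) (hT : G.TrivialImage γ S) : (S.card : ℤ) ≤ 2 * (G.verts S).card - 3 := by
  obtain ⟨φ, hφ⟩ := hT.exists_potential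
  have hcard : (S.image fun e => (e, φ (G.tail e))).card = S.card :=
    card_image_of_injective _ fun _ _ h => congrArg Prod.fst h
  have hverts : (G.Development γ).verts (S.image fun e => (e, φ (G.tail e))) ⊆
      (G.verts S).image fun v => (v, φ v) := by
    intro p hp
    obtain ⟨_, hs, rfl | rfl⟩ := (G.Development γ).mem_verts.mp hp <;>
      obtain ⟨e, he, rfl⟩ := mem_image.mp hs
    · exact mem_image_of_mem _ (G.tail_mem_verts he)
    · show (G.head e, φ (G.tail e) + γ e) ∈ _
      rw [← hφ e he]
      exact mem_image_of_mem _ (G.head_mem_verts he)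
  have := hdev _ (subset_univ _) (hS.image fun e => (e, φ (G.tail e)))
  have := (card_le_card hverts).trans card_image_le
  omega

lemma card_le_of_development_sparse (hdev : (G.Development γ).Sparse 2 3 univ) {S : Finset E}
    (hS : S.Nonempty) : (S.card : ℤ) ≤ 2 * (G.verts S).card - 1 := by
  have := hdev (lift S) (subset_univ _) (lift_nonempty hS)
  rw [card_lift, card_verts_lift] at this
  omega

theorem coneLamanSparse_iff_development_sparse :
    G.ConeLamanSparse γ ↔ (G.Development γ).Sparse 2 3 univ :=
  ⟨development_sparse_of_coneLamanSparse, fun hdev _ hS =>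
    ⟨card_le_of_trivialImage hdev hS, fun _ => card_le_of_development_sparse hdev hS⟩⟩

end Sparsity

section Shift

lemma verts_image_devShiftE (A : Finset (E × ZMod 3)) (z : ZMod 3) :
    (G.Development γ).verts (A.image (devShiftE z)) =
      ((G.Development γ).verts A).image (devShift z) := by
  simp only [verts, image_union, image_image]
  congr 2
  funext s
  simp [Development, devShift, devShiftE, add_right_comm]

end Shift

section Components

variable [Fintype E]

lemma tight_lift_iff (hdev : (G.Development γ).Sparse 2 3 univ) (S : Finset E) :
    (G.Development γ).Tight 2 3 (lift S) ↔ (S.card : ℤ) = 2 * (G.verts S).card - 1 := by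
  rw [Tight, card_lift, card_verts_lift]
  exact ⟨fun h => by omega, fun h => ⟨hdev.mono (subset_univ _), by omega⟩⟩

lemma Tight.image_devShiftE (hdev : (G.Development γ).Sparse 2 3 univ)
    {A : Finset (E × ZMod 3)} (hA : (G.Development γ).Tight 2 3 A)
    (z : ZMod 3) : (G.Development γ).Tight 2 3 (A.image (devShiftE z)) := by
  refine ⟨hdev.mono (subset_univ _), ?_⟩
  rw [card_image_of_injective _ (devShiftE_injective z), verts_image_devShiftE,
    card_image_of_injective _ (devShift_injective z)]
  exact hA.2

lemma Tight.lift_image_fst (hdev : (G.Development γ).Sparse 2 3 univ) {S : Finset E}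
    (hS : S.Nonempty) {T : Finset (E × ZMod 3)}
    (hT : (G.Development γ).Tight 2 3 T) (hST : lift S ⊆ T) :
    (G.Development γ).Tight 2 3 (lift (T.image Prod.fst)) := by
  have hshift : ∀ z, lift S ⊆ T.image (devShiftE z) := fun z =>
    (lift_image_devShiftE S z).symm.subset.trans (image_subset_image hST)
  have hne := lift_nonempty hS
  rw [lift_image_fst_eq_union]
  refine Tight.union (by norm_num) ?_ (hT.image_devShiftE hdev 2) (hdev.mono (subset_univ _))
    (hne.mono (subset_inter (hST.trans subset_union_left) (hshift 2)))
  exact hT.union (by norm_num) (hT.image_devShiftE hdev 1) (hdev.mono (subset_univ _))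
    (hne.mono (subset_inter hST (hshift 1)))

lemma lift_eq_of_maximal (hdev : (G.Development γ).Sparse 2 3 univ) {S : Finset E}
    (hS : (S.card : ℤ) = 2 * (G.verts S).card - 1)
    (hmax : ∀ S' : Finset E, S ⊆ S' → (S'.card : ℤ) = 2 * (G.verts S').card - 1 → S' = S)
    {T : Finset (E × ZMod 3)} (hST : lift S ⊆ T) (hT : (G.Development γ).Tight 2 3 T) :
    T = lift S := by
  have hSne : S.Nonempty := nonempty_iff_ne_empty.mpr fun h => by simp [h, verts] at hS
  have hπ : T.image Prod.fst = S :=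
    hmax _ ((image_fst_lift S).symm.subset.trans (image_subset_image hST))
      ((tight_lift_iff hdev _).mp (hT.lift_image_fst hdev hSne hST))
  have hT_sub := subset_lift_image_fst T
  rw [hπ] at hT_sub
  exact hT_sub.antisymm hST

end Components

end Development

end Multigraph

open Multigraph in
/-- `(G, γ)` is cone-Laman iff its development is a Laman graph; moreover,
for cone-Laman-sparse `(G, γ)`, the rigid components of `(G, γ)` correspond to the
symmetric `(2,3)`-components of the development. -/
theorem cone_laman_iff_development_laman
    {V E : Type} [Fintype V] [Fintype E] [DecidableEq V] [DecidableEq E]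
    (G : Multigraph V E) (γ : E → ZMod 3) :
    (G.ConeLamanGraph γ ↔
      ((G.Development γ).Sparse 2 3 Finset.univ ∧
        (Fintype.card (E × ZMod 3) : ℤ) = 2 * (Fintype.card (V × ZMod 3) : ℤ) - 3)) ∧
    (G.ConeLamanSparse γ →
      ∀ S : Finset E,
        (((S.card : ℤ) = 2 * ((G.verts S).card : ℤ) - 1 ∧
            ∀ S' : Finset E, S ⊆ S' →
              (S'.card : ℤ) = 2 * ((G.verts S').card : ℤ) - 1 → S' = S) ↔
          ((G.Development γ).Tight 2 3 (lift S) ∧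
            (∀ T' : Finset (E × ZMod 3), lift S ⊆ T' →
              (G.Development γ).Tight 2 3 T' → T' = lift S) ∧
            (lift S).image (devShiftE 1) = lift S))) := by
  have hcard : ∀ (X : Type) [Fintype X],
      (Fintype.card (X × ZMod 3) : ℤ) = 3 * Fintype.card X := fun X _ => by
    rw [Fintype.card_prod, ZMod.card]
    push_cast
    ring
  refine ⟨?_, fun hsp S => ?_⟩
  · rw [ConeLamanGraph, coneLamanSparse_iff_development_sparse, hcard E, hcard V]
    exact and_congr_right fun _ => ⟨fun h => by omega, fun h => by omega⟩
  · have hdev := coneLamanSparse_iff_development_sparse.mp hsp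
    rw [tight_lift_iff hdev]
    refine ⟨fun ⟨hS, hmax⟩ => ⟨hS, fun T hST hT => lift_eq_of_maximal hdev hS hmax hST hT,
      lift_image_devShiftE S 1⟩, fun ⟨hS, hmax, _⟩ => ⟨hS, fun S' hSS' hS' => ?_⟩⟩
    have hlift := hmax (lift S') (lift_mono hSS') ((tight_lift_iff hdev S').mpr hS')
    rw [← image_fst_lift S', hlift, image_fst_lift]
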